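/- Let d_1 ≤ d_2 ≤ ... ≤ d_r be positive real numbers (or positive integers), let s ≥ 1, and for i = 1,...,r set M_i = d_{r-i+1} + ... + d_{r-1} + s·d_r. Then C(s+r-1, r)·d_1·d_2···d_r ≤ (∏_{i=1}^r M_i)/r!. -/

import Mathlib

/-!
Pair the `i`-th factor `M_i` with `(s + i - 1) · d_{r-i+1}`. By monotonicity each of the `i - 1`
summands `d_{r-i+1}, …, d_{r-1}` of `M_i` is at least `d_{r-i+1}`, and `s · d_r ≥ s · d_{r-i+1}`, so
`M_i ≥ (s + i - 1) · d_{r-i+1}`. Multiplying over `i`, the left side becomes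
`s (s + 1) ⋯ (s + r - 1) · d_1 ⋯ d_r = r! · C(s + r - 1, r) · d_1 ⋯ d_r`.
-/

open Finset

lemma prod_Icc_one_add_sub_one (s r : ℕ) : ∏ i ∈ Icc 1 r, (s + i - 1) = s.ascFactorial r := by
  induction r with
  | zero => simp
  | succ n ih =>
    rw [prod_Icc_succ_top (by omega), ih, Nat.ascFactorial_succ, Nat.mul_comm]
    congr 2

lemma cast_choose_mul_factorial_eq_prod_Icc (s r : ℕ) :
    ((s + r - 1).choose r : ℝ) * r.factorial = ∏ i ∈ Icc 1 r, ((s + i - 1 : ℕ) : ℝ) := by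
  rw [← Nat.cast_prod, prod_Icc_one_add_sub_one, Nat.ascFactorial_eq_factorial_mul_choose']
  push_cast
  ring

lemma prod_Icc_one_reflect {M : Type*} [CommMonoid M] (f : ℕ → M) (r : ℕ) :
    ∏ i ∈ Icc 1 r, f (r - i + 1) = ∏ i ∈ Icc 1 r, f i := by
  refine prod_nbij' (fun i => r - i + 1) (fun i => r - i + 1) ?_ ?_ ?_ ?_ fun _ _ => rfl
  all_goals
    intro i hi
    simp only [mem_Icc] at hi ⊢
    omega

lemma mul_le_sum_Icc_add_of_monotoneOn {d : ℕ → ℝ} {r : ℕ} (hd : MonotoneOn d (Set.Icc 1 r))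
    (s : ℕ) {i : ℕ} (hi : i ∈ Icc 1 r) :
    ((s + i - 1 : ℕ) : ℝ) * d (r - i + 1)
      ≤ ∑ j ∈ Icc (r - i + 1) (r - 1), d j + s * d r := by
  rw [mem_Icc] at hi
  have hk : r - i + 1 ∈ Set.Icc 1 r := ⟨by omega, by omega⟩
  have hsum : ((i - 1 : ℕ) : ℝ) * d (r - i + 1) ≤ ∑ j ∈ Icc (r - i + 1) (r - 1), d j := by
    have hcard : #(Icc (r - i + 1) (r - 1)) = i - 1 := by
      rw [Nat.card_Icc]
      omega
    rw [← hcard, ← nsmul_eq_mul]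
    refine card_nsmul_le_sum _ _ _ fun j hj => ?_
    rw [mem_Icc] at hj
    exact hd hk ⟨by omega, by omega⟩ hj.1
  have hlast : (s : ℝ) * d (r - i + 1) ≤ s * d r :=
    mul_le_mul_of_nonneg_left (hd hk ⟨by omega, le_rfl⟩ hk.2) s.cast_nonneg
  calc ((s + i - 1 : ℕ) : ℝ) * d (r - i + 1)
      = ((i - 1 : ℕ) : ℝ) * d (r - i + 1) + s * d (r - i + 1) := by
        rw [show s + i - 1 = i - 1 + s by omega]
        push_cast
        ring
    _ ≤ _ := add_le_add hsum hlast

theorem stmt5_general (r s : ℕ) (d : ℕ → ℝ)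
    (hpos : ∀ i, 1 ≤ i → i ≤ r → 0 < d i)
    (hmono : ∀ i j, 1 ≤ i → i ≤ j → j ≤ r → d i ≤ d j) :
    ((s + r - 1).choose r : ℝ) * ∏ i ∈ Finset.Icc 1 r, d i
      ≤ (∏ i ∈ Finset.Icc 1 r,
          ((∑ j ∈ Finset.Icc (r - i + 1) (r - 1), d j) + (s : ℝ) * d r)) / (r.factorial : ℝ) := by
  have hd : MonotoneOn d (Set.Icc 1 r) := fun i hi j hj hij => hmono i j hi.1 hij hj.2
  rw [le_div_iff₀ (by positivity)]
  calc ((s + r - 1).choose r : ℝ) * (∏ i ∈ Icc 1 r, d i) * r.factorial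
      = ∏ i ∈ Icc 1 r, ((s + i - 1 : ℕ) : ℝ) * d (r - i + 1) := by
        rw [prod_mul_distrib, prod_Icc_one_reflect d, ← cast_choose_mul_factorial_eq_prod_Icc]
        ring
    _ ≤ _ := by
        refine prod_le_prod (fun i hi => ?_) fun i hi => mul_le_sum_Icc_add_of_monotoneOn hd s hi
        rw [mem_Icc] at hi
        have := hpos (r - i + 1) (by omega) (by omega)
        positivity

theorem stmt5 (r s : ℕ) (hr : 1 ≤ r) (hs : 1 ≤ s) (d : ℕ → ℝ)
    (hpos : ∀ i, 1 ≤ i → i ≤ r → 0 < d i)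
    (hmono : ∀ i j, 1 ≤ i → i ≤ j → j ≤ r → d i ≤ d j) :
    ((s + r - 1).choose r : ℝ) * ∏ i ∈ Finset.Icc 1 r, d i
      ≤ (∏ i ∈ Finset.Icc 1 r,
          ((∑ j ∈ Finset.Icc (r - i + 1) (r - 1), d j) + (s : ℝ) * d r)) / (r.factorial : ℝ) :=
  stmt5_general r s d hpos hmono
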